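/- The graph constructed in the feedback-vertex-set reduction has feedback vertex set number at most 1: deleting the vertex s_x (alternatively s_y) leaves an acyclic graph. -/

import Mathlib

/-- Vertex set of the graph constructed in the feedback-vertex-set reduction:
core vertices `s = 0`, the middle vertex `1` of the path of length 2 from `s` to
`s_x`, `s_x = 2`, `s_y = 3`; for each `i`, a path of length `L i` from `α_i` to `β_i`;
pendant γ-paths hanging from `s_x` and pendant δ-paths hanging from `s_y`. -/
def RedV (m p q : ℕ) (L : Fin m → ℕ) (Pg : Fin p → ℕ) (Pd : Fin q → ℕ) : Type :=
  Fin 4 ⊕ ((Σ i : Fin m, Fin (L i + 1)) ⊕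
    ((Σ j : Fin p, Fin (Pg j + 1)) ⊕ (Σ k : Fin q, Fin (Pd k + 1))))

/-- Adjacency-generating relation of the constructed graph: `s`–mid, mid–`s_x`,
`s`–`s_y`; `s_x` adjacent to every `α_i` (index 0) and `β_i` (index `L i`);
consecutive vertices on each `α_i`–`β_i` path; `s_x` attached to the first vertex of
each γ-path and `s_y` to the first vertex of each δ-path; consecutive vertices along
each pendant path. -/
def redRel (m p q : ℕ) (L : Fin m → ℕ) (Pg : Fin p → ℕ) (Pd : Fin q → ℕ) :
    RedV m p q L Pg Pd → RedV m p q L Pg Pd → Prop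
  | Sum.inl a, Sum.inl b =>
      ((a : ℕ) = 0 ∧ (b : ℕ) = 1) ∨ ((a : ℕ) = 1 ∧ (b : ℕ) = 2) ∨
        ((a : ℕ) = 0 ∧ (b : ℕ) = 3)
  | Sum.inl a, Sum.inr (Sum.inl u) =>
      (a : ℕ) = 2 ∧ ((u.2 : ℕ) = 0 ∨ (u.2 : ℕ) = L u.1)
  | Sum.inr (Sum.inl u), Sum.inr (Sum.inl v) =>
      u.1 = v.1 ∧ (v.2 : ℕ) = (u.2 : ℕ) + 1
  | Sum.inl a, Sum.inr (Sum.inr (Sum.inl u)) => (a : ℕ) = 2 ∧ (u.2 : ℕ) = 0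
  | Sum.inr (Sum.inr (Sum.inl u)), Sum.inr (Sum.inr (Sum.inl v)) =>
      u.1 = v.1 ∧ (v.2 : ℕ) = (u.2 : ℕ) + 1
  | Sum.inl a, Sum.inr (Sum.inr (Sum.inr u)) => (a : ℕ) = 3 ∧ (u.2 : ℕ) = 0
  | Sum.inr (Sum.inr (Sum.inr u)), Sum.inr (Sum.inr (Sum.inr v)) =>
      u.1 = v.1 ∧ (v.2 : ℕ) = (u.2 : ℕ) + 1
  | _, _ => False

/-- The graph constructed in the feedback-vertex-set reduction. -/
def redGraph (m p q : ℕ) (L : Fin m → ℕ) (Pg : Fin p → ℕ) (Pd : Fin q → ℕ) :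
    SimpleGraph (RedV m p q L Pg Pd) :=
  SimpleGraph.fromRel (redRel m p q L Pg Pd)

open SimpleGraph

/-!
Once `s_x` is deleted, the remaining graph is a rooted forest: `s` is the root of a tree containing
the middle vertex, `s_y` and the δ-paths, and every α–β path and every γ-path is a tree rooted at its
first vertex. Concretely, every edge joins a vertex to its parent, which has smaller depth. A graph
with this property is acyclic: on a cycle, both cycle-neighbours of a vertex of maximal depth are
its parent, contradicting that a cycle does not backtrack.
-/

theorem SimpleGraph.isAcyclic_of_parent {V : Type*} {G : SimpleGraph V} (parent : V → V)
    (depth : V → ℕ)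
    (hadj : ∀ ⦃u v⦄, G.Adj u v →
      u = parent v ∧ depth u < depth v ∨ v = parent u ∧ depth v < depth u) :
    G.IsAcyclic := by
  have eq_parent {u v} (huv : G.Adj u v) (hle : depth u ≤ depth v) : u = parent v := by
    rcases hadj huv with h | h
    · exact h.1
    · omega
  intro a c hc
  classical
  obtain ⟨v, hv, hmax⟩ := c.support.toFinset.exists_max_image depth
    ⟨a, List.mem_toFinset.2 c.start_mem_support⟩
  rw [List.mem_toFinset] at hv
  set c' := c.rotate v hv
  have hc' : c'.IsCycle := hc.rotate hv
  have hmax' (i : ℕ) : depth (c'.getVert i) ≤ depth v :=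
    hmax _ (List.mem_toFinset.2 ((c.mem_support_rotate_iff v hv).1 (c'.getVert_mem_support i)))
  have hsnd := eq_parent (Walk.adj_snd hc'.not_nil).symm (hmax' 1)
  have hpen := eq_parent (Walk.adj_penultimate hc'.not_nil) (hmax' _)
  exact hc'.snd_ne_penultimate (hsnd.trans hpen.symm)

theorem Fin.eq_sub_one_of_val_eq_add_one {n : ℕ} {j k : Fin (n + 1)} (h : (k : ℕ) = j + 1) :
    j = k - 1 := by
  rw [Fin.ext_iff, Fin.coe_sub_one]
  split_ifs <;> simp_all

namespace RedV

variable {m p q : ℕ} {L : Fin m → ℕ} {Pg : Fin p → ℕ} {Pd : Fin q → ℕ}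

def depth : RedV m p q L Pg Pd → ℕ
  | Sum.inl a => if a = 0 then 0 else 1
  | Sum.inr (Sum.inl u) => u.2
  | Sum.inr (Sum.inr (Sum.inl u)) => u.2
  | Sum.inr (Sum.inr (Sum.inr u)) => u.2 + 2

/-- On the first vertex of an α–β path or a γ-path, `k - 1` wraps around in `Fin`; this junk
value is harmless, as such a vertex has no neighbour of smaller depth once `s_x` is gone. -/
def parent : RedV m p q L Pg Pd → RedV m p q L Pg Pd
  | Sum.inl _ => Sum.inl 0
  | Sum.inr (Sum.inl ⟨i, k⟩) => Sum.inr (Sum.inl ⟨i, k - 1⟩)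
  | Sum.inr (Sum.inr (Sum.inl ⟨i, k⟩)) => Sum.inr (Sum.inr (Sum.inl ⟨i, k - 1⟩))
  | Sum.inr (Sum.inr (Sum.inr ⟨i, k⟩)) =>
      if k = 0 then Sum.inl 3 else Sum.inr (Sum.inr (Sum.inr ⟨i, k - 1⟩))

theorem eq_parent_and_depth_lt_of_redRel {u v : RedV m p q L Pg Pd} (hu : u ≠ Sum.inl 2)
    (hv : v ≠ Sum.inl 2) (h : redRel m p q L Pg Pd u v) : u = parent v ∧ depth u < depth v := by
  rcases u with a | ⟨i, j⟩ | ⟨i, j⟩ | ⟨i, j⟩ <;> rcases v with b | ⟨i', k⟩ | ⟨i', k⟩ | ⟨i', k⟩ <;>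
    simp only [redRel] at h
  case inl.inl =>
    rcases h with ⟨ha, hb⟩ | ⟨-, hb⟩ | ⟨ha, hb⟩
    · exact ⟨congrArg Sum.inl (Fin.ext ha), by simp [depth, Fin.ext_iff, ha, hb]⟩
    · exact absurd (congrArg Sum.inl (Fin.ext hb)) hv
    · exact ⟨congrArg Sum.inl (Fin.ext ha), by simp [depth, Fin.ext_iff, ha, hb]⟩
  case inl.inr.inl | inl.inr.inr.inl => exact absurd (congrArg Sum.inl (Fin.ext h.1)) hu
  case inl.inr.inr.inr =>
    obtain ⟨ha, hk⟩ := h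
    exact ⟨(congrArg Sum.inl (Fin.ext ha)).trans (if_pos (Fin.ext hk)).symm,
      by simp [depth, Fin.ext_iff, ha]⟩
  case inr.inr.inr.inr.inr.inr =>
    obtain ⟨rfl, hk⟩ := h
    have hk0 : k ≠ 0 := by rintro rfl; simp at hk
    exact ⟨by rw [Fin.eq_sub_one_of_val_eq_add_one hk]; exact (if_neg hk0).symm,
      by simp only [depth]; omega⟩
  all_goals
    obtain ⟨rfl, hk⟩ := h
    exact ⟨by rw [Fin.eq_sub_one_of_val_eq_add_one hk]; rfl, by simp only [depth]; omega⟩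

end RedV

/-- The constructed graph has feedback vertex set number at most 1: deleting the
vertex `s_x` leaves an acyclic graph. -/
theorem redGraph_minus_sx_acyclic (m p q : ℕ) (L : Fin m → ℕ)
    (Pg : Fin p → ℕ) (Pd : Fin q → ℕ) :
    ((redGraph m p q L Pg Pd).induce
      {v : RedV m p q L Pg Pd | v ≠ Sum.inl (2 : Fin 4)}).IsAcyclic := by
  have hsx : (Sum.inl 2 : RedV m p q L Pg Pd) ∉ {v : RedV m p q L Pg Pd | v ≠ Sum.inl 2} :=
    fun h => h rfl
  refine .anti (induce_deleteIncidenceSet_of_notMem _ hsx).ge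
    ((isAcyclic_of_parent RedV.parent RedV.depth ?_).induce _)
  intro u v huv
  obtain ⟨⟨-, hrel⟩, hu, hv⟩ := deleteIncidenceSet_adj.1 huv
  rcases hrel with h | h
  · exact .inl (RedV.eq_parent_and_depth_lt_of_redRel hu hv h)
  · exact .inr (RedV.eq_parent_and_depth_lt_of_redRel hv hu h)
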